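/- arXiv:1102.5217 — 2 statements merged into one kernel-verified Lean document; each statement's English description precedes it below -/
import Mathlib

section
/- Let ν and ℓ be nonnegative integers with ν < ℓ. Let κ : ℝ → ℝ be a compactly supported integrable kernel of order (ν, ℓ), i.e., ∫ u^j κ(u) du = 0 for every integer j with 0 ≤ j < ℓ and j ≠ ν, ∫ u^ν κ(u) du = ν!, and ∫ |u^ℓ κ(u)| du < ∞. Let g : ℝ → ℝ be ℓ-times continuously differentiable with c₀ := sup_{x∈ℝ} |g^{(ℓ)}(x)| < ∞. Then for every t ∈ ℝ and every bandwidth b > 0, | ∫_ℝ g(t₁) κ((t₁ − t)/b) dt₁ − b^{ν+1} g^{(ν)}(t) | ≤ c₀ (b^{ℓ+1}/ℓ!) ∫_ℝ |u^ℓ κ(u)| du. -/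
/-!
After the substitution `t₁ = t + b u` the integral becomes `b ∫ g(t + b u) κ(u) du`. Replacing
`g(t + b u)` by its Taylor polynomial of degree `ℓ - 1` at `t`, the moment conditions kill every
term except the `ν`-th, which contributes `b^ν g^{(ν)}(t)`. The Lagrange remainder is at most
`c₀ |b u|^ℓ / ℓ!`, and integrating it against `|κ|` gives the bound.
-/

open MeasureTheory Set Finset
open scoped Nat

theorem HasCompactSupport.integrable_continuous_mul {X R : Type*} [TopologicalSpace X]
    [T2Space X] [MeasurableSpace X] [OpensMeasurableSpace X] {μ : Measure X} [NormedRing R]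
    [SecondCountableTopologyEither X R] {f κ : X → R} (hκ : HasCompactSupport κ)
    (hκi : Integrable κ μ) (hf : Continuous f) :
    Integrable (fun x => f x * κ x) μ :=
  (integrableOn_iff_integrable_of_support_subset
    ((Function.support_mul_subset_right f κ).trans (subset_tsupport κ))).1
    (hκi.integrableOn.continuousOn_mul hf.continuousOn hκ)

theorem integral_eq_smul_integral_comp_mul_add {E : Type*} [NormedAddCommGroup E]
    [NormedSpace ℝ E] (f : ℝ → E) {b : ℝ} (hb : 0 < b) (t : ℝ) :
    ∫ x, f x = b • ∫ u, f (b * u + t) := by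
  rw [Measure.integral_comp_mul_left (fun x => f (x + t)), integral_add_right_eq_self,
    abs_of_pos (inv_pos.mpr hb), smul_inv_smul₀ hb.ne']

theorem continuous_taylorWithinEval {E : Type*} [NormedAddCommGroup E] [NormedSpace ℝ E]
    (f : ℝ → E) (n : ℕ) (s : Set ℝ) (x₀ : ℝ) : Continuous (taylorWithinEval f n s x₀) := by
  simp_rw [funext (taylor_within_apply f n s x₀)]
  fun_prop

theorem taylorWithinEval_uIcc_eq_univ {f : ℝ → ℝ} {n : ℕ} (hf : ContDiff ℝ n f) {x₀ x : ℝ}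
    (hx : x₀ ≠ x) : taylorWithinEval f n (uIcc x₀ x) x₀ = taylorWithinEval f n univ x₀ := by
  ext y
  simp only [taylor_within_apply, iteratedDerivWithin_univ]
  refine Finset.sum_congr rfl fun j hj => ?_
  rw [iteratedDerivWithin_eq_iteratedDeriv (uniqueDiffOn_uIcc hx) _ left_mem_uIcc]
  exact (hf.of_le (by exact_mod_cast Nat.lt_succ_iff.mp (Finset.mem_range.mp hj))).contDiffAt

theorem abs_sub_taylorWithinEval_le {f : ℝ → ℝ} {n : ℕ} (hf : ContDiff ℝ (n + 1) f) {C : ℝ}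
    (hC : ∀ y, |iteratedDeriv (n + 1) f y| ≤ C) (x₀ x : ℝ) :
    |f x - taylorWithinEval f n univ x₀ x| ≤ C * |x - x₀| ^ (n + 1) / (n + 1)! := by
  rcases eq_or_ne x₀ x with rfl | hx
  · simp [taylorWithinEval_self]
  -- The Lagrange form is needed: `taylor_mean_remainder_bound` only gives `n!` in the denominator.
  obtain ⟨y, -, hy⟩ := taylor_mean_remainder_lagrange_iteratedDeriv hx hf.contDiffOn
  rw [← taylorWithinEval_uIcc_eq_univ (hf.of_le (by exact_mod_cast n.le_succ)) hx, hy, abs_div,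
    abs_mul, abs_pow, Nat.abs_cast]
  gcongr
  exact hC y

theorem integral_taylorWithinEval_mul_kernel {κ : ℝ → ℝ} {ν n : ℕ} (hν : ν < n + 1)
    (hint : ∀ j, Integrable (fun u : ℝ => u ^ j * κ u))
    (hmom0 : ∀ j < n + 1, j ≠ ν → ∫ u : ℝ, u ^ j * κ u = 0)
    (hmomν : ∫ u : ℝ, u ^ ν * κ u = ν !) (f : ℝ → ℝ) (s : Set ℝ) (x₀ b : ℝ) :
    ∫ u, taylorWithinEval f n s x₀ (b * u + x₀) * κ u = b ^ ν * iteratedDerivWithin ν f s x₀ := by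
  have hexpand : ∀ u, taylorWithinEval f n s x₀ (b * u + x₀) * κ u =
      ∑ j ∈ range (n + 1), (iteratedDerivWithin j f s x₀ * b ^ j / j !) * (u ^ j * κ u) := by
    intro u
    rw [taylor_within_apply, Finset.sum_mul]
    refine Finset.sum_congr rfl fun j _ => ?_
    simp only [add_sub_cancel_right, smul_eq_mul, mul_pow]
    ring
  simp_rw [hexpand]
  rw [integral_finsetSum _ fun j _ => (hint j).const_mul _]
  simp_rw [integral_const_mul]
  rw [Finset.sum_eq_single_of_mem ν (Finset.mem_range.mpr hν)
    fun j hj hjν => by rw [hmom0 j (Finset.mem_range.mp hj) hjν, mul_zero], hmomν]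
  field_simp

theorem abs_integral_mul_le_of_abs_le_pow {h κ : ℝ → ℝ} {C : ℝ} {m : ℕ}
    (hh : ∀ u, |h u| ≤ C * |u| ^ m) (hint : Integrable (fun u : ℝ => u ^ m * κ u)) :
    |∫ u, h u * κ u| ≤ C * ∫ u, |u ^ m * κ u| := by
  rw [← Real.norm_eq_abs, ← integral_const_mul]
  refine norm_integral_le_of_norm_le (hint.abs.const_mul C)
    (Filter.Eventually.of_forall fun u => ?_)
  rw [Real.norm_eq_abs, abs_mul, abs_mul, abs_pow, ← mul_assoc]
  exact mul_le_mul_of_nonneg_right (hh u) (abs_nonneg _)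

theorem abs_integral_taylor_remainder_mul_le {f κ : ℝ → ℝ} {n : ℕ} (hf : ContDiff ℝ (n + 1) f)
    {C : ℝ} (hC : ∀ y, |iteratedDeriv (n + 1) f y| ≤ C)
    (hint : Integrable (fun u : ℝ => u ^ (n + 1) * κ u)) {b : ℝ} (hb : 0 < b) (x₀ : ℝ) :
    |∫ u, (f (b * u + x₀) - taylorWithinEval f n univ x₀ (b * u + x₀)) * κ u|
      ≤ C * b ^ (n + 1) / (n + 1)! * ∫ u, |u ^ (n + 1) * κ u| := by
  refine abs_integral_mul_le_of_abs_le_pow (fun u => ?_) hint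
  convert abs_sub_taylorWithinEval_le hf hC x₀ (b * u + x₀) using 1
  rw [add_sub_cancel_right, abs_mul, mul_pow, abs_of_pos hb]
  ring

theorem stmt4_general
    (ν ℓ : ℕ) (hνℓ : ν < ℓ)
    (κ : ℝ → ℝ) (hκc : HasCompactSupport κ) (hκi : Integrable κ)
    (hmom0 : ∀ j : ℕ, j < ℓ → j ≠ ν → ∫ u : ℝ, u ^ j * κ u = 0)
    (hmomν : ∫ u : ℝ, u ^ ν * κ u = (Nat.factorial ν : ℝ))
    (g : ℝ → ℝ) (hg : ContDiff ℝ (ℓ : ℕ∞) g)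
    (c0 : ℝ) (hc0 : ∀ x, |iteratedDeriv ℓ g x| ≤ c0)
    (t b : ℝ) (hb : 0 < b) :
    |(∫ t1 : ℝ, g t1 * κ ((t1 - t) / b)) - b ^ (ν + 1) * iteratedDeriv ν g t|
      ≤ c0 * (b ^ (ℓ + 1) / (Nat.factorial ℓ : ℝ)) * ∫ u : ℝ, |u ^ ℓ * κ u| := by
  obtain ⟨n, rfl⟩ : ∃ n, ℓ = n + 1 := ⟨ℓ - 1, by omega⟩
  have hmom : ∀ j : ℕ, Integrable (fun u : ℝ => u ^ j * κ u) := fun j =>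
    hκc.integrable_continuous_mul hκi (continuous_pow j)
  set P := taylorWithinEval g n univ t
  have hP : Continuous P := continuous_taylorWithinEval g n univ t
  have hPκ : ∫ u, P (b * u + t) * κ u = b ^ ν * iteratedDeriv ν g t := by
    simpa using integral_taylorWithinEval_mul_kernel hνℓ hmom hmom0 hmomν g univ t b
  have hsplit : ∫ u, (g (b * u + t) - P (b * u + t)) * κ u
      = (∫ u, g (b * u + t) * κ u) - ∫ u, P (b * u + t) * κ u := by
    simp_rw [sub_mul]
    exact integral_sub (hκc.integrable_continuous_mul hκi (by fun_prop))
      (hκc.integrable_continuous_mul hκi (by fun_prop))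
  have hsubst : ∫ t1, g t1 * κ ((t1 - t) / b) = b * ∫ u, g (b * u + t) * κ u := by
    rw [integral_eq_smul_integral_comp_mul_add _ hb t, smul_eq_mul]
    simp only [add_sub_cancel_right, mul_div_cancel_left₀ _ hb.ne']
  calc |(∫ t1, g t1 * κ ((t1 - t) / b)) - b ^ (ν + 1) * iteratedDeriv ν g t|
      = b * |∫ u, (g (b * u + t) - P (b * u + t)) * κ u| := by
        rw [hsubst, hsplit, hPκ, pow_succ', mul_assoc, ← mul_sub, abs_mul, abs_of_pos hb]
    _ ≤ b * (c0 * b ^ (n + 1) / (n + 1)! * ∫ u, |u ^ (n + 1) * κ u|) := by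
        gcongr
        exact abs_integral_taylor_remainder_mul_le hg hc0 (hmom (n + 1)) hb t
    _ = c0 * (b ^ (n + 1 + 1) / (n + 1)!) * ∫ u, |u ^ (n + 1) * κ u| := by ring

/-- Bias bound for kernel smoothing with a kernel of order `(ν, ℓ)` (proof of Lemma 1):
`|∫ g(t₁) κ((t₁−t)/b) dt₁ − b^{ν+1} g^{(ν)}(t)| ≤ c₀ (b^{ℓ+1}/ℓ!) ∫ |u^ℓ κ(u)| du`. -/
theorem stmt4
    (ν ℓ : ℕ) (hνℓ : ν < ℓ)
    (κ : ℝ → ℝ) (hκc : HasCompactSupport κ) (hκi : Integrable κ)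
    (hmom0 : ∀ j : ℕ, j < ℓ → j ≠ ν → ∫ u : ℝ, u ^ j * κ u = 0)
    (hmomν : ∫ u : ℝ, u ^ ν * κ u = (Nat.factorial ν : ℝ))
    (hmomℓ : Integrable (fun u : ℝ => u ^ ℓ * κ u))
    (g : ℝ → ℝ) (hg : ContDiff ℝ (ℓ : ℕ∞) g)
    (c0 : ℝ) (hc0 : ∀ x, |iteratedDeriv ℓ g x| ≤ c0)
    (t b : ℝ) (hb : 0 < b) :
    |(∫ t1 : ℝ, g t1 * κ ((t1 - t) / b)) - b ^ (ν + 1) * iteratedDeriv ν g t|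
      ≤ c0 * (b ^ (ℓ + 1) / (Nat.factorial ℓ : ℝ)) * ∫ u : ℝ, |u ^ ℓ * κ u| :=
  stmt4_general ν ℓ hνℓ κ hκc hκi hmom0 hmomν g hg c0 hc0 t b hb
end

section
/- Let H be a real normed vector space and Z = [0,1]. Let β : ℝ → H be twice continuously differentiable with sup_{z∈[0,1]} ‖β''(z)‖ =: M < ∞. Suppose that for each n we are given: grid points z^{(n)}_1, …, z^{(n)}_{P_n} ∈ [0,1]; weight functions ω^{(n)}_p : [0,1] → ℝ satisfying, for every z ∈ [0,1], Σ_p ω^{(n)}_p(z) = 1, Σ_p ω^{(n)}_p(z)(z^{(n)}_p − z) = 0, Σ_p |ω^{(n)}_p(z)| ≤ C, and Σ_p |ω^{(n)}_p(z)| (z^{(n)}_p − z)² ≤ C b_n², where C < ∞ is a constant and b_n → 0; and raw estimates β̃_n(p) ∈ H with ε_n := max_{1≤p≤P_n} ‖β̃_n(p) − β(z^{(n)}_p)‖ → 0 as n → ∞. Define the refined estimates β̂_n(z) = Σ_{p=1}^{P_n} ω^{(n)}_p(z) β̃_n(p). Then sup_{z∈[0,1]} ‖β̂_n(z) − β(z)‖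 → 0 as n → ∞; in particular ∫_0^1 ‖β̂_n(z) − β(z)‖² dz → 0. -/
open MeasureTheory Filter Topology

/-!
The weights reproduce constants and linear functions, so for every `z` the error
`β̂ₙ(z) - β(z)` splits into a weighted sum of the estimation errors `β̃ₙ(p) - β(zₚ)`, of norm at
most `C εₙ`, and a weighted sum of first-order Taylor remainders of `β` at `z`, of norm at most
`M C bₙ²`. This bound is uniform in `z`; integrating its square over `[0,1]` gives the
integrated squared error.
-/

section Taylor

variable {H : Type*} [NormedAddCommGroup H] [NormedSpace ℝ H] {β : ℝ → H} {s : Set ℝ} {M : ℝ}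

theorem Convex.norm_deriv_sub_le_of_norm_iteratedDeriv_two_le (hs : Convex ℝ s)
    (hβ : ContDiff ℝ 2 β) (hM : ∀ z ∈ s, ‖iteratedDeriv 2 β z‖ ≤ M) {z x : ℝ}
    (hz : z ∈ s) (hx : x ∈ s) : ‖deriv β x - deriv β z‖ ≤ M * ‖x - z‖ := by
  have hβ' : Differentiable ℝ (deriv β) :=
    (hβ.iterate_deriv' 1 1).differentiable one_ne_zero
  refine hs.norm_image_sub_le_of_norm_deriv_le (fun t _ => hβ' t) (fun t ht => ?_) hz hx
  simpa [iteratedDeriv_succ, iteratedDeriv_one] using hM t ht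

theorem Convex.norm_sub_sub_smul_deriv_le (hs : Convex ℝ s)
    (hβ : ContDiff ℝ 2 β) (hM : ∀ z ∈ s, ‖iteratedDeriv 2 β z‖ ≤ M) {z x : ℝ}
    (hz : z ∈ s) (hx : x ∈ s) : ‖β x - β z - (x - z) • deriv β z‖ ≤ M * (x - z) ^ 2 := by
  have hM0 : 0 ≤ M := (norm_nonneg _).trans (hM z hz)
  set φ : ℝ → H := fun t => β t - (t - z) • deriv β z
  have hφ : ∀ t, HasDerivAt φ (deriv β t - deriv β z) t := fun t => by
    convert ((hβ.differentiable two_ne_zero t).hasDerivAt).sub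
      (((hasDerivAt_id' t).sub_const z).smul_const (deriv β z)) using 1
    · rfl
    · rw [one_smul]
  have hbound : ∀ t ∈ Set.uIcc x z, ‖deriv φ t‖ ≤ M * |x - z| := fun t ht => by
    rw [(hφ t).deriv]
    calc ‖deriv β t - deriv β z‖ ≤ M * ‖t - z‖ :=
          hs.norm_deriv_sub_le_of_norm_iteratedDeriv_two_le hβ hM hz
            (hs.ordConnected.uIcc_subset hx hz ht)
      _ ≤ M * |x - z| := by
          gcongr
          exact Real.dist_right_le_of_mem_uIcc ht
  calc ‖β x - β z - (x - z) • deriv β z‖ = ‖φ x - φ z‖ := by simp [φ, sub_right_comm]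
    _ ≤ M * |x - z| * ‖x - z‖ :=
        (convex_uIcc x z).norm_image_sub_le_of_norm_deriv_le
          (fun t _ => (hφ t).differentiableAt) hbound Set.right_mem_uIcc Set.left_mem_uIcc
    _ = M * (x - z) ^ 2 := by rw [Real.norm_eq_abs, mul_assoc, abs_mul_abs_self, sq]

end Taylor

section LocalLinear

variable {ι H : Type*} [Fintype ι] [NormedAddCommGroup H] [NormedSpace ℝ H]
  {w x : ι → ℝ} {f : ℝ → H} {z : ℝ}

theorem sum_smul_sub_eq_of_sum_eq_one_of_sum_mul_sub_eq_zero (h1 : ∑ p, w p = 1)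
    (hlin : ∑ p, w p * (x p - z) = 0) (y : ι → H) (v : H) :
    ∑ p, w p • y p - f z =
      ∑ p, w p • (y p - f (x p)) + ∑ p, w p • (f (x p) - f z - (x p - z) • v) := by
  have hconst : (∑ p, w p) • f z = f z := by rw [h1, one_smul]
  have hslope : (∑ p, w p * (x p - z)) • v = 0 := by rw [hlin, zero_smul]
  simp only [smul_sub, Finset.sum_sub_distrib, smul_smul, ← Finset.sum_smul, hconst, hslope]
  abel

theorem norm_sum_smul_le_of_norm_le {u : ι → H} {g : ι → ℝ} (hu : ∀ p, ‖u p‖ ≤ g p) :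
    ‖∑ p, w p • u p‖ ≤ ∑ p, |w p| * g p :=
  (norm_sum_le _ _).trans <| Finset.sum_le_sum fun p _ => by
    rw [norm_smul, Real.norm_eq_abs]
    exact mul_le_mul_of_nonneg_left (hu p) (abs_nonneg _)

theorem norm_sum_smul_sub_le {y : ι → H} {v : H} {C B e M : ℝ} (h1 : ∑ p, w p = 1)
    (hlin : ∑ p, w p * (x p - z) = 0) (habs : ∑ p, |w p| ≤ C)
    (hsq : ∑ p, |w p| * (x p - z) ^ 2 ≤ B) (he : 0 ≤ e) (hy : ∀ p, ‖y p - f (x p)‖ ≤ e)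
    (hM : 0 ≤ M) (hf : ∀ p, ‖f (x p) - f z - (x p - z) • v‖ ≤ M * (x p - z) ^ 2) :
    ‖∑ p, w p • y p - f z‖ ≤ C * e + M * B := by
  rw [sum_smul_sub_eq_of_sum_eq_one_of_sum_mul_sub_eq_zero h1 hlin y v]
  refine (norm_add_le _ _).trans (add_le_add ?_ ?_)
  · calc _ ≤ ∑ p, |w p| * e := norm_sum_smul_le_of_norm_le hy
      _ = (∑ p, |w p|) * e := Finset.sum_mul .. |>.symm
      _ ≤ C * e := mul_le_mul_of_nonneg_right habs he
  · calc _ ≤ ∑ p, |w p| * (M * (x p - z) ^ 2) := norm_sum_smul_le_of_norm_le hf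
      _ = M * ∑ p, |w p| * (x p - z) ^ 2 := by
          rw [Finset.mul_sum]
          exact Finset.sum_congr rfl fun p _ => mul_left_comm ..
      _ ≤ M * B := mul_le_mul_of_nonneg_left hsq hM

end LocalLinear

section UniformBound

variable {ι α H : Type*} [NormedAddCommGroup H] {F : ι → α → H} {f : α → H} {s : Set α}
  {l : Filter ι} {D : ι → ℝ}

theorem tendstoUniformlyOn_of_norm_sub_le (hD : Tendsto D l (𝓝 0))
    (h : ∀ n, ∀ z ∈ s, ‖F n z - f z‖ ≤ D n) : TendstoUniformlyOn F f l s := by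
  rw [Metric.tendstoUniformlyOn_iff]
  intro δ hδ
  filter_upwards [hD.eventually (gt_mem_nhds hδ)] with n hn z hz
  rw [dist_comm, dist_eq_norm]
  exact (h n z hz).trans_lt hn

theorem tendsto_setIntegral_norm_sub_sq_of_norm_sub_le [MeasurableSpace α] {μ : Measure α}
    (hs : μ s < ⊤) (hD : Tendsto D l (𝓝 0)) (h : ∀ n, ∀ z ∈ s, ‖F n z - f z‖ ≤ D n) :
    Tendsto (fun n => ∫ z in s, ‖F n z - f z‖ ^ 2 ∂μ) l (𝓝 0) := by
  have hbound : ∀ n, ‖∫ z in s, ‖F n z - f z‖ ^ 2 ∂μ‖ ≤ D n ^ 2 * μ.real s := fun n => by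
    refine norm_setIntegral_le_of_norm_le_const hs fun z hz => ?_
    rw [Real.norm_eq_abs, abs_of_nonneg (by positivity)]
    exact pow_le_pow_left₀ (norm_nonneg _) (h n z hz) 2
  refine squeeze_zero_norm hbound ?_
  simpa using (hD.pow 2).mul_const (μ.real s)

end UniformBound

/-- Deterministic skeleton of Theorem 1: if bin-wise raw estimates of a twice continuously
differentiable `H`-valued curve `β` are uniformly consistent at the grid points, and the
smoothing weights reproduce constants and linear functions, have total absolute mass `≤ C`
and second-moment mass `≤ C bₙ²` with `bₙ → 0`, then the refined estimator
`β̂ₙ(z) = Σ_p ωₙ_p(z) β̃ₙ(p)` converges to `β` uniformly on `[0,1]`, and hence in integrated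
squared error. -/
theorem stmt14
    {H : Type*} [NormedAddCommGroup H] [NormedSpace ℝ H]
    (β : ℝ → H) (hβ : ContDiff ℝ 2 β)
    (M : ℝ) (hM : ∀ z ∈ Set.Icc (0 : ℝ) 1, ‖iteratedDeriv 2 β z‖ ≤ M)
    (Pn : ℕ → ℕ) (zg : (n : ℕ) → Fin (Pn n) → ℝ)
    (hzg : ∀ n p, zg n p ∈ Set.Icc (0 : ℝ) 1)
    (ω : (n : ℕ) → Fin (Pn n) → ℝ → ℝ)
    (C : ℝ) (bn : ℕ → ℝ) (hbn : Tendsto bn atTop (𝓝 0))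
    (hω1 : ∀ n, ∀ z ∈ Set.Icc (0 : ℝ) 1, ∑ p, ω n p z = 1)
    (hωz : ∀ n, ∀ z ∈ Set.Icc (0 : ℝ) 1, ∑ p, ω n p z * (zg n p - z) = 0)
    (hωabs : ∀ n, ∀ z ∈ Set.Icc (0 : ℝ) 1, ∑ p, |ω n p z| ≤ C)
    (hω2 : ∀ n, ∀ z ∈ Set.Icc (0 : ℝ) 1, ∑ p, |ω n p z| * (zg n p - z) ^ 2 ≤ C * (bn n) ^ 2)
    (βt : (n : ℕ) → Fin (Pn n) → H)
    (ε : ℕ → ℝ) (hε : Tendsto ε atTop (𝓝 0))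
    (hεb : ∀ n p, ‖βt n p - β (zg n p)‖ ≤ ε n) :
    TendstoUniformlyOn (fun n z => ∑ p, (ω n p z) • βt n p) β atTop (Set.Icc 0 1)
    ∧ Tendsto (fun n => ∫ z in Set.Icc (0 : ℝ) 1, ‖(∑ p, (ω n p z) • βt n p) - β z‖ ^ 2)
        atTop (𝓝 0) := by
  have hM0 : 0 ≤ M := (norm_nonneg _).trans (hM 0 (by norm_num))
  have hbound : ∀ n, ∀ z ∈ Set.Icc (0 : ℝ) 1,
      ‖∑ p, ω n p z • βt n p - β z‖ ≤ C * |ε n| + M * (C * bn n ^ 2) := fun n z hz =>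
    norm_sum_smul_sub_le (hω1 n z hz) (hωz n z hz) (hωabs n z hz) (hω2 n z hz) (abs_nonneg _)
      (fun p => (hεb n p).trans (le_abs_self _)) hM0
      (fun p => (convex_Icc 0 1).norm_sub_sub_smul_deriv_le hβ hM hz (hzg n p))
  have hD : Tendsto (fun n => C * |ε n| + M * (C * bn n ^ 2)) atTop (𝓝 0) := by
    simpa using (hε.abs.const_mul C).add (((hbn.pow 2).const_mul C).const_mul M)
  exact ⟨tendstoUniformlyOn_of_norm_sub_le hD hbound,
    tendsto_setIntegral_norm_sub_sq_of_norm_sub_le (by simp) hD hbound⟩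
end
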